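/- Let f : A → A be a homeomorphism of the closed annulus isotopic to the identity with lift F, and let z be a point of A whose forward orbit is bounded in A. Then the rotation interval of z is contained in the rotation interval of its ω-limit set: ρ̄(F,z) ⊆ ρ̄(F, ω_f(z)), where ρ̄(F,Y) denotes the interval [inf, sup] of rotation numbers over points of Y for which the rotation number exists. -/

import Mathlib

/-! The horizontal displacement of `F` is `T`-periodic, so it descends to a continuous function
`ψ` on the compact annulus, and rotation numbers are Birkhoff averages of `ψ` under `f`.

For a continuous map of a compact space put `β = inf_n max_{ω(z)} S_n ψ / n`. Each `c > β` is
beaten uniformly on `ω(z)` by one block length `n₀`, hence on an open neighbourhood of `ω(z)` that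
the orbit of `z` eventually never leaves; chaining blocks of length `n₀` gives
`limsup S_n ψ (z) / n ≤ β`, and the same at every point of `ω(z)`. Conversely every `S_n` reaches
`n * β` somewhere on `ω(z)`; chaining blocks once more, then compactness, produce a point of `ω(z)`
with `S_n ≥ n * β - 1` for all `n`, whose averages therefore converge to `β`. Replacing `ψ` by
`-ψ` handles the liminf. -/

open Filter Topology

/-- The lifted annulus `𝒜 = ℝ × [0,1]`. -/
abbrev 𝒜 : Type := ℝ × (Set.Icc (0:ℝ) 1)

/-- The closed annulus `A = S¹ × [0,1]`. -/
abbrev Ann : Type := AddCircle (1:ℝ) × (Set.Icc (0:ℝ) 1)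

/-- The universal covering map `π : ℝ × [0,1] → S¹ × [0,1]`. -/
noncomputable def cov : 𝒜 → Ann := fun z => ((z.1 : AddCircle (1:ℝ)), z.2)

/-- The deck translation `T(x,y) = (x+1,y)`. -/
def T : 𝒜 → 𝒜 := fun z => (z.1 + 1, z.2)

open Function Set

section BirkhoffBounds

variable {X : Type*} {g : X → X} {ψ : X → ℝ} {M : ℝ}

lemma birkhoffAverage_real_eq_div (g : X → X) (ψ : X → ℝ) (n : ℕ) (x : X) :
    birkhoffAverage ℝ g ψ n x = birkhoffSum g ψ n x / n := by
  rw [birkhoffAverage, smul_eq_mul, inv_mul_eq_div]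

lemma abs_birkhoffSum_le (hM : ∀ y, |ψ y| ≤ M) (n : ℕ) (x : X) :
    |birkhoffSum g ψ n x| ≤ n * M :=
  calc |birkhoffSum g ψ n x| ≤ ∑ k ∈ Finset.range n, |ψ (g^[k] x)| :=
        Finset.abs_sum_le_sum_abs _ _
    _ ≤ ∑ _k ∈ Finset.range n, M := Finset.sum_le_sum fun k _ => hM _
    _ = n * M := by simp

lemma abs_birkhoffAverage_le (hM : ∀ y, |ψ y| ≤ M) (n : ℕ) (x : X) :
    |birkhoffAverage ℝ g ψ n x| ≤ M := by
  rcases n.eq_zero_or_pos with rfl | hn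
  · simpa using (abs_nonneg _).trans (hM x)
  · rw [birkhoffAverage_real_eq_div, abs_div, Nat.abs_cast, div_le_iff₀ (by positivity), mul_comm]
    exact abs_birkhoffSum_le hM n x

lemma abs_le_of_tendsto_birkhoffAverage (hM : ∀ y, |ψ y| ≤ M) {x : X} {r : ℝ}
    (h : Tendsto (birkhoffAverage ℝ g ψ · x) atTop (𝓝 r)) : |r| ≤ M :=
  le_of_tendsto' (continuous_abs.tendsto r |>.comp h) fun n => abs_birkhoffAverage_le hM n x

lemma isBoundedUnder_le_birkhoffAverage (hM : ∀ y, |ψ y| ≤ M) (x : X) :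
    IsBoundedUnder (· ≤ ·) atTop (birkhoffAverage ℝ g ψ · x) :=
  isBoundedUnder_of_eventually_le <| .of_forall fun n => (abs_le.1 (abs_birkhoffAverage_le hM n x)).2

lemma isBoundedUnder_ge_birkhoffAverage (hM : ∀ y, |ψ y| ≤ M) (x : X) :
    IsBoundedUnder (· ≥ ·) atTop (birkhoffAverage ℝ g ψ · x) :=
  isBoundedUnder_of_eventually_ge <| .of_forall fun n => (abs_le.1 (abs_birkhoffAverage_le hM n x)).1

lemma neg_limsup_birkhoffAverage_neg (hM : ∀ y, |ψ y| ≤ M) (x : X) :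
    -limsup (birkhoffAverage ℝ g (-ψ) · x) atTop = liminf (birkhoffAverage ℝ g ψ · x) atTop := by
  have := Antitone.map_liminf_of_continuousAt (f := fun r : ℝ => -r) (fun _ _ h => neg_le_neg h) _
    continuous_neg.continuousAt (isBoundedUnder_le_birkhoffAverage (g := g) hM x).isCoboundedUnder_ge
    (isBoundedUnder_ge_birkhoffAverage hM x)
  rw [birkhoffAverage_neg, neg_eq_iff_eq_neg, this]
  rfl

lemma limsup_birkhoffAverage_le (hM : ∀ y, |ψ y| ≤ M) {x : X} {c C : ℝ}
    (h : ∀ᶠ n in atTop, birkhoffSum g ψ n x ≤ n * c + C) :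
    limsup (birkhoffAverage ℝ g ψ · x) atTop ≤ c := by
  have hlim : Tendsto (fun n : ℕ => c + C / n) atTop (𝓝 c) := by
    simpa using tendsto_const_nhds.add (tendsto_const_div_atTop_nhds_zero_nat C)
  refine (limsup_le_limsup ?_ (isBoundedUnder_ge_birkhoffAverage hM x).isCoboundedUnder_le
    hlim.isBoundedUnder_le).trans_eq hlim.limsup_eq
  filter_upwards [h, eventually_gt_atTop 0] with n hn hn0
  rw [birkhoffAverage_real_eq_div, add_div' _ _ _ (by positivity), div_le_div_iff_of_pos_right
    (by positivity)]
  linarith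

lemma le_liminf_birkhoffAverage (hM : ∀ y, |ψ y| ≤ M) {x : X} {c C : ℝ}
    (h : ∀ᶠ n in atTop, n * c - C ≤ birkhoffSum g ψ n x) :
    c ≤ liminf (birkhoffAverage ℝ g ψ · x) atTop := by
  have hM' : ∀ y, |(-ψ) y| ≤ M := fun y => (abs_neg (ψ y)).trans_le (hM y)
  have := limsup_birkhoffAverage_le (g := g) (c := -c) (C := C) hM' <| h.mono fun n hn => by
    rw [birkhoffSum_neg]; linarith
  rw [← neg_limsup_birkhoffAverage_neg hM]
  linarith

/-- The term `N * (M + |c|)` absorbs the last, incomplete block. -/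
lemma birkhoffSum_le_of_forall_exists_block {s : Set X} (hs : MapsTo g s s)
    (hM : ∀ y, |ψ y| ≤ M) {N : ℕ} {c δ : ℝ} (hδ : 0 ≤ δ)
    (h : ∀ y ∈ s, ∃ m ∈ Finset.Icc 1 N, birkhoffSum g ψ m y ≤ m * c - δ) (n : ℕ) {y : X}
    (hy : y ∈ s) : birkhoffSum g ψ n y ≤ n * c - (n / N - 1) * δ + N * (M + |c|) := by
  induction n using Nat.strong_induction_on generalizing y with
  | _ n ih =>
  obtain ⟨m, hm, hmy⟩ := h y hy
  obtain ⟨hm1, hmN⟩ := Finset.mem_Icc.1 hm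
  have hN : (0 : ℝ) < N := by exact_mod_cast (by omega : 0 < N)
  rcases lt_or_ge n N with hn | hn
  · have hnN : (n : ℝ) ≤ N := by exact_mod_cast hn.le
    have hM0 : 0 ≤ M := (abs_nonneg _).trans (hM y)
    have hsum := (abs_le.1 (abs_birkhoffSum_le (g := g) hM n y)).2
    have hnc : -(N * |c|) ≤ n * c := by nlinarith [neg_abs_le c, abs_nonneg c]
    have hnδ : (n / N - 1) * δ ≤ 0 :=
      mul_nonpos_of_nonpos_of_nonneg (by rw [sub_nonpos]; exact div_le_one_of_le₀ hnN hN.le) hδ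
    nlinarith
  · obtain ⟨k, rfl⟩ := Nat.exists_eq_add_of_le (hmN.trans hn)
    have hk := ih k (by omega) (hs.iterate m hy)
    have hmδ : m / N * δ ≤ δ :=
      mul_le_of_le_one_left hδ (div_le_one_of_le₀ (by exact_mod_cast hmN) hN.le)
    rw [birkhoffSum_add]
    push_cast
    rw [add_div]
    linarith

lemma birkhoffSum_le_of_forall_birkhoffSum_le {s : Set X} (hs : MapsTo g s s)
    (hM : ∀ y, |ψ y| ≤ M) {n₀ : ℕ} (hn₀ : 1 ≤ n₀) {c : ℝ}
    (h : ∀ y ∈ s, birkhoffSum g ψ n₀ y ≤ n₀ * c) (n : ℕ) {y : X} (hy : y ∈ s) :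
    birkhoffSum g ψ n y ≤ n * c + n₀ * (M + |c|) := by
  simpa using birkhoffSum_le_of_forall_exists_block hs hM le_rfl
    (fun y hy => ⟨n₀, Finset.mem_Icc.2 ⟨hn₀, le_rfl⟩, by simpa using h y hy⟩) n hy

/-- Otherwise every point of `s` starts a block of length `≤ N` and slope `β` with deficit `1`,
and chaining these blocks pushes every `S_n` on `s` below `n * β` for large `n`. The deficit `1`
costs nothing, as it disappears from the averages. -/
lemma exists_mem_forall_le_sub_one_le_birkhoffSum {s : Set X} (hs : MapsTo g s s)
    (hM : ∀ y, |ψ y| ≤ M) {β : ℝ} (hβ : ∀ n : ℕ, ∃ y ∈ s, n * β ≤ birkhoffSum g ψ n y) (N : ℕ) :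
    ∃ y ∈ s, ∀ n ≤ N, n * β - 1 ≤ birkhoffSum g ψ n y := by
  by_contra! hcon
  have hblock : ∀ y ∈ s, ∃ m ∈ Finset.Icc 1 N, birkhoffSum g ψ m y ≤ m * β - 1 := by
    intro y hy
    obtain ⟨m, hmN, hm⟩ := hcon y hy
    have hm0 : m ≠ 0 := by rintro rfl; norm_num at hm
    exact ⟨m, Finset.mem_Icc.2 ⟨by omega, hmN⟩, hm.le⟩
  obtain ⟨y₀, hy₀, -⟩ := hβ 0
  obtain ⟨m, hm, -⟩ := hblock y₀ hy₀
  have hN : (0 : ℝ) < N := by exact_mod_cast (Finset.mem_Icc.1 hm).1.trans (Finset.mem_Icc.1 hm).2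
  obtain ⟨n, hn⟩ := exists_nat_gt ((N * (M + |β|) + 1) * N)
  obtain ⟨y, hy, hny⟩ := hβ n
  have := birkhoffSum_le_of_forall_exists_block hs hM zero_le_one hblock n hy
  have := (lt_div_iff₀ hN).2 hn
  linarith

end BirkhoffBounds

section OmegaLimit

open omegaLimit

variable {X : Type*} [TopologicalSpace X] {g : X → X} {ψ : X → ℝ} {M : ℝ}

lemma Continuous.exists_forall_abs_le [CompactSpace X] (hψ : Continuous ψ) :
    ∃ M, ∀ y, |ψ y| ≤ M := by
  simpa using isCompact_univ.exists_bound_of_continuousOn hψ.continuousOn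

lemma continuous_birkhoffSum (hg : Continuous g) (hψ : Continuous ψ) (n : ℕ) :
    Continuous (birkhoffSum g ψ n) :=
  continuous_finsetSum _ fun k _ => hψ.comp (hg.iterate k)

lemma mapsTo_omegaLimit_iterate (hg : Continuous g) (s : Set X) :
    MapsTo g (ω atTop (fun n x => g^[n] x) s) (ω atTop (fun n x => g^[n] x) s) :=
  (mapsTo_omegaLimit s (ϕ' := fun n x => g^[n + 1] x) (mapsTo_id s)
    (fun n x => (iterate_succ_apply' g n x).symm) hg).mono_right
    (omegaLimit_subset_of_tendsto _ s (tendsto_add_atTop_nat 1))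

lemma exists_tendsto_iterate_subseq_of_mem_omegaLimit [FirstCountableTopology X] {z w : X}
    (hw : w ∈ ω atTop (fun n x => g^[n] x) {z}) :
    ∃ φ : ℕ → ℕ, StrictMono φ ∧ Tendsto (fun n => g^[φ n] z) atTop (𝓝 w) :=
  ((mem_omegaLimit_singleton_iff_mapClusterPt _ _ z w).1 hw).tendsto_subseq

/-- The orbit of `z` eventually stays in the open neighbourhood `{S_{n₀} < n₀ * c}` of its
ω-limit set. -/
lemma eventually_birkhoffSum_le_of_omegaLimit [CompactSpace X] (hg : Continuous g)
    (hψ : Continuous ψ) (hM : ∀ y, |ψ y| ≤ M) {z : X} {n₀ : ℕ} (hn₀ : 1 ≤ n₀) {c : ℝ}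
    (h : ∀ y ∈ ω atTop (fun n x => g^[n] x) {z}, birkhoffSum g ψ n₀ y < n₀ * c) :
    ∃ C, ∀ᶠ n in atTop, birkhoffSum g ψ n z ≤ n * c + C := by
  have hU : IsOpen {y | birkhoffSum g ψ n₀ y < n₀ * c} :=
    isOpen_lt (continuous_birkhoffSum hg hψ n₀) continuous_const
  obtain ⟨K, hK⟩ := eventually_atTop.1 (eventually_mapsTo_of_isOpen_of_omegaLimit_subset _ _ _ hU h)
  have htail : MapsTo g (range fun k => g^[k] (g^[K] z)) (range fun k => g^[k] (g^[K] z)) := by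
    rintro _ ⟨k, rfl⟩
    exact ⟨k + 1, iterate_succ_apply' g k _⟩
  have htail_le : ∀ y ∈ range fun k => g^[k] (g^[K] z), birkhoffSum g ψ n₀ y ≤ n₀ * c := by
    rintro _ ⟨k, rfl⟩
    have hk : birkhoffSum g ψ n₀ (g^[k + K] z) < n₀ * c := hK (k + K) (by omega) (mem_singleton z)
    rw [iterate_add_apply] at hk
    exact hk.le
  refine ⟨birkhoffSum g ψ K z - K * c + n₀ * (M + |c|), ?_⟩
  filter_upwards [eventually_ge_atTop K] with n hn
  obtain ⟨k, rfl⟩ := Nat.exists_eq_add_of_le hn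
  have hk := birkhoffSum_le_of_forall_birkhoffSum_le htail hM hn₀ htail_le k (y := g^[K] z) ⟨0, rfl⟩
  rw [birkhoffSum_add]
  push_cast
  linarith

/-- `β` is the infimum over `n ≥ 1` of `max_s S_n / n`. -/
lemma exists_birkhoffSum_growth_rate {s : Set X} (hs : IsCompact s) (hne : s.Nonempty)
    (hcont : ∀ n, Continuous (birkhoffSum g ψ n)) (hM : ∀ y, |ψ y| ≤ M) :
    ∃ β : ℝ, (∀ n : ℕ, ∃ y ∈ s, n * β ≤ birkhoffSum g ψ n y) ∧
      ∀ c > β, ∃ n ≥ 1, ∀ y ∈ s, birkhoffSum g ψ n y < n * c := by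
  choose ymax hymax hmax using fun n => hs.exists_isMaxOn hne (hcont n).continuousOn
  have hbdd : BddBelow (range fun n : ℕ => birkhoffSum g ψ (n + 1) (ymax (n + 1)) / (n + 1)) := by
    refine ⟨-M, ?_⟩
    rintro _ ⟨n, rfl⟩
    have := abs_birkhoffAverage_le (g := g) hM (n + 1) (ymax (n + 1))
    rw [birkhoffAverage_real_eq_div] at this
    push_cast at this
    exact (abs_le.1 this).1
  refine ⟨⨅ n : ℕ, birkhoffSum g ψ (n + 1) (ymax (n + 1)) / (n + 1), ?_, ?_⟩
  · rintro (_ | n)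
    · obtain ⟨y, hy⟩ := hne
      exact ⟨y, hy, by simp⟩
    · refine ⟨ymax (n + 1), hymax _, ?_⟩
      have := ciInf_le hbdd n
      push_cast
      rwa [le_div_iff₀ (by positivity), mul_comm] at this
  · intro c hc
    obtain ⟨n, hn⟩ := exists_lt_of_ciInf_lt hc
    refine ⟨n + 1, by omega, fun y hy => ?_⟩
    rw [div_lt_iff₀ (by positivity), mul_comm] at hn
    push_cast
    exact (isMaxOn_iff.1 (hmax (n + 1)) y hy).trans_lt hn

lemma exists_mem_forall_sub_one_le_birkhoffSum [CompactSpace X] {s : Set X} (hs : IsClosed s)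
    (hsg : MapsTo g s s) (hcont : ∀ n, Continuous (birkhoffSum g ψ n)) (hM : ∀ y, |ψ y| ≤ M)
    {β : ℝ} (hβ : ∀ n : ℕ, ∃ y ∈ s, n * β ≤ birkhoffSum g ψ n y) :
    ∃ y ∈ s, ∀ n : ℕ, n * β - 1 ≤ birkhoffSum g ψ n y := by
  let E : ℕ → Set X := fun N => s ∩ ⋂ n ∈ Iic N, {y | n * β - 1 ≤ birkhoffSum g ψ n y}
  have hE : ∀ N y, y ∈ E N ↔ y ∈ s ∧ ∀ n ≤ N, n * β - 1 ≤ birkhoffSum g ψ n y := by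
    simp [E]
  have hEclosed : ∀ N, IsClosed (E N) := fun N =>
    hs.inter (isClosed_biInter fun n _ => isClosed_le continuous_const (hcont n))
  obtain ⟨y, hy⟩ := IsCompact.nonempty_iInter_of_sequence_nonempty_isCompact_isClosed E
    (fun N y hy => (hE _ _).2 ⟨((hE _ _).1 hy).1, fun n hn => ((hE _ _).1 hy).2 n (by omega)⟩)
    (fun N => (exists_mem_forall_le_sub_one_le_birkhoffSum hsg hM hβ N).imp fun y hy => (hE _ _).2 hy)
    (hEclosed 0).isCompact hEclosed
  rw [mem_iInter] at hy
  exact ⟨y, ((hE 0 y).1 (hy 0)).1, fun n => ((hE n y).1 (hy n)).2 n le_rfl⟩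

theorem exists_mem_omegaLimit_tendsto_birkhoffAverage_ge_limsup [CompactSpace X]
    (hg : Continuous g) (hψ : Continuous ψ) (z : X) :
    ∃ w ∈ ω atTop (fun n x => g^[n] x) {z}, ∃ r,
      Tendsto (birkhoffAverage ℝ g ψ · w) atTop (𝓝 r) ∧
        limsup (birkhoffAverage ℝ g ψ · z) atTop ≤ r := by
  set s := ω atTop (fun n x => g^[n] x) {z}
  obtain ⟨M, hM⟩ := hψ.exists_forall_abs_le
  have hcont := continuous_birkhoffSum hg hψ
  have hs : IsClosed s := isClosed_omegaLimit _ _ _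
  have hsg : MapsTo g s s := mapsTo_omegaLimit_iterate hg {z}
  obtain ⟨β, hβ, hβc⟩ := exists_birkhoffSum_growth_rate hs.isCompact
    (nonempty_omegaLimit _ _ _ (singleton_nonempty z)) hcont hM
  obtain ⟨w, hws, hw⟩ := exists_mem_forall_sub_one_le_birkhoffSum hs hsg hcont hM hβ
  have hupper : ∀ y ∈ s, limsup (birkhoffAverage ℝ g ψ · y) atTop ≤ β := by
    refine fun y hy => forall_gt_imp_ge_iff_le_of_dense.1 fun c hc => ?_
    obtain ⟨n₀, hn₀, hlt⟩ := hβc c hc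
    exact limsup_birkhoffAverage_le hM <| .of_forall fun n =>
      birkhoffSum_le_of_forall_birkhoffSum_le hsg hM hn₀ (fun y hy => (hlt y hy).le) n hy
  refine ⟨w, hws, β, tendsto_of_le_liminf_of_limsup_le
    (le_liminf_birkhoffAverage hM (.of_forall fun n => hw n)) (hupper w hws)
    (isBoundedUnder_le_birkhoffAverage hM w) (isBoundedUnder_ge_birkhoffAverage hM w), ?_⟩
  refine forall_gt_imp_ge_iff_le_of_dense.1 fun c hc => ?_
  obtain ⟨n₀, hn₀, hlt⟩ := hβc c hc
  obtain ⟨C, hC⟩ := eventually_birkhoffSum_le_of_omegaLimit hg hψ hM hn₀ hlt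
  exact limsup_birkhoffAverage_le hM hC

theorem exists_mem_omegaLimit_tendsto_birkhoffAverage_le_liminf [CompactSpace X]
    (hg : Continuous g) (hψ : Continuous ψ) (z : X) :
    ∃ w ∈ ω atTop (fun n x => g^[n] x) {z}, ∃ r,
      Tendsto (birkhoffAverage ℝ g ψ · w) atTop (𝓝 r) ∧
        r ≤ liminf (birkhoffAverage ℝ g ψ · z) atTop := by
  obtain ⟨M, hM⟩ := hψ.exists_forall_abs_le
  obtain ⟨w, hw, r, hr, hle⟩ := exists_mem_omegaLimit_tendsto_birkhoffAverage_ge_limsup hg hψ.neg z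
  refine ⟨w, hw, -r, ?_, ?_⟩
  · simpa [birkhoffAverage_neg] using hr.neg
  · rw [← neg_limsup_birkhoffAverage_neg hM]
    linarith

end OmegaLimit

section Annulus

lemma continuous_cov : Continuous cov :=
  (continuous_quotient_mk'.comp continuous_fst).prodMk continuous_snd

lemma surjective_cov : Surjective cov :=
  QuotientAddGroup.mk_surjective.prodMap surjective_id

lemma isQuotientMap_cov : IsQuotientMap cov :=
  (QuotientAddGroup.isOpenMap_coe.prodMap IsOpenMap.id).isQuotientMap continuous_cov surjective_cov

lemma iterate_T_apply (n : ℕ) (u : 𝒜) : T^[n] u = (u.1 + n, u.2) := by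
  induction n with
  | zero => simp
  | succ n ih => rw [iterate_succ_apply', ih, T]; push_cast; ring_nf

lemma exists_iterate_T_eq_of_cov_eq {u v : 𝒜} (h : cov u = cov v) :
    ∃ n : ℕ, T^[n] u = v ∨ T^[n] v = u := by
  have h1 : ((u.1 : AddCircle (1 : ℝ))) = v.1 := congrArg Prod.fst h
  have h2 : u.2 = v.2 := (Prod.ext_iff.1 h).2
  obtain ⟨k, hk⟩ := (AddCircle.coe_eq_zero_iff 1).1
    (by rw [AddCircle.coe_sub, h1, sub_self] : ((v.1 - u.1 : ℝ) : AddCircle (1 : ℝ)) = 0)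
  rw [zsmul_one] at hk
  obtain ⟨n, rfl | rfl⟩ := Int.eq_nat_or_neg k
  · push_cast at hk
    exact ⟨n, .inl (by rw [iterate_T_apply]; exact Prod.ext (by linarith) h2)⟩
  · push_cast at hk
    exact ⟨n, .inr (by rw [iterate_T_apply]; exact Prod.ext (by linarith) h2.symm)⟩

variable {F : 𝒜 → 𝒜}

def displacement (F : 𝒜 → 𝒜) (u : 𝒜) : ℝ := (F u).1 - u.1

lemma displacement_iterate_T (hFT : ∀ z, F (T z) = T (F z)) (n : ℕ) (u : 𝒜) :
    displacement F (T^[n] u) = displacement F u := by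
  induction n with
  | zero => rfl
  | succ n ih => rw [iterate_succ_apply', displacement, hFT, ← ih, displacement]; simp [T]

lemma displacement_eq_of_cov_eq (hFT : ∀ z, F (T z) = T (F z)) {u v : 𝒜} (h : cov u = cov v) :
    displacement F u = displacement F v := by
  obtain ⟨n, rfl | rfl⟩ := exists_iterate_T_eq_of_cov_eq h
  · exact (displacement_iterate_T hFT n u).symm
  · exact displacement_iterate_T hFT n v

/-- `surjInv` picks an arbitrary lift; by `displacement_eq_of_cov_eq` the choice is irrelevant. -/
noncomputable def annulusDisplacement (F : 𝒜 → 𝒜) : Ann → ℝ :=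
  displacement F ∘ surjInv surjective_cov

lemma annulusDisplacement_cov (hFT : ∀ z, F (T z) = T (F z)) (u : 𝒜) :
    annulusDisplacement F (cov u) = displacement F u :=
  displacement_eq_of_cov_eq hFT (surjInv_eq surjective_cov _)

lemma continuous_annulusDisplacement (hF : Continuous F) (hFT : ∀ z, F (T z) = T (F z)) :
    Continuous (annulusDisplacement F) := by
  rw [isQuotientMap_cov.continuous_iff, show annulusDisplacement F ∘ cov = displacement F from
    funext (annulusDisplacement_cov hFT)]
  exact (continuous_fst.comp hF).sub continuous_fst

lemma birkhoffSum_annulusDisplacement {f : Ann → Ann} (hlift : ∀ z : 𝒜, cov (F z) = f (cov z))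
    (hFT : ∀ z, F (T z) = T (F z)) (n : ℕ) (u : 𝒜) :
    birkhoffSum f (annulusDisplacement F) n (cov u) = (F^[n] u).1 - u.1 := by
  induction n with
  | zero => simp
  | succ n ih =>
    rw [birkhoffSum_succ, ih, ← (Semiconj.iterate_right hlift n) u, annulusDisplacement_cov hFT,
      displacement, iterate_succ_apply']
    ring

lemma birkhoffAverage_annulusDisplacement {f : Ann → Ann}
    (hlift : ∀ z : 𝒜, cov (F z) = f (cov z)) (hFT : ∀ z, F (T z) = T (F z)) (n : ℕ) (u : 𝒜) :
    birkhoffAverage ℝ f (annulusDisplacement F) n (cov u) = ((F^[n] u).1 - u.1) / n := by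
  rw [birkhoffAverage_real_eq_div, birkhoffSum_annulusDisplacement hlift hFT]

lemma abs_le_of_tendsto_displacement_div {f : Ann → Ann} (hlift : ∀ z : 𝒜, cov (F z) = f (cov z))
    (hFT : ∀ z, F (T z) = T (F z)) {M : ℝ} (hM : ∀ y, |annulusDisplacement F y| ≤ M) {u : 𝒜}
    {r : ℝ} (hr : Tendsto (fun n : ℕ => ((F^[n] u).1 - u.1) / (n : ℝ)) atTop (𝓝 r)) : |r| ≤ M := by
  simp only [← birkhoffAverage_annulusDisplacement hlift hFT] at hr
  exact abs_le_of_tendsto_birkhoffAverage hM hr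

open omegaLimit in
lemma exists_lift_mem_of_mem_omegaLimit {f : Ann → Ann}
    (hlift : ∀ z : 𝒜, cov (F z) = f (cov z)) (hFT : ∀ z, F (T z) = T (F z)) {z w : Ann}
    (hw : w ∈ ω atTop (fun n x => f^[n] x) {z}) {r : ℝ}
    (hr : Tendsto (birkhoffAverage ℝ f (annulusDisplacement F) · w) atTop (𝓝 r)) :
    ∃ wt : 𝒜, cov wt ∈ {w : Ann | ∃ φ : ℕ → ℕ, StrictMono φ ∧
        Tendsto (fun n => f^[φ n] z) atTop (𝓝 w)} ∧
      Tendsto (fun n : ℕ => ((F^[n] wt).1 - wt.1) / (n : ℝ)) atTop (𝓝 r) := by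
  obtain ⟨wt, rfl⟩ := surjective_cov w
  refine ⟨wt, exists_tendsto_iterate_subseq_of_mem_omegaLimit hw, ?_⟩
  simpa only [birkhoffAverage_annulusDisplacement hlift hFT] using hr

end Annulus

theorem stmt_6_general (f : Ann ≃ₜ Ann) (F : 𝒜 ≃ₜ 𝒜)
    (hlift : ∀ z : 𝒜, cov (F z) = f (cov z)) (hFT : ∀ z, F (T z) = T (F z))
    (z : Ann) :
    ∀ zt : 𝒜, cov zt = z →
      Set.Icc (liminf (fun n : ℕ => (((⇑F)^[n] zt).1 - zt.1) / (n:ℝ)) atTop)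
              (limsup (fun n : ℕ => (((⇑F)^[n] zt).1 - zt.1) / (n:ℝ)) atTop) ⊆
      Set.Icc
        (sInf {r : ℝ | ∃ wt : 𝒜,
          cov wt ∈ {w : Ann | ∃ φ : ℕ → ℕ, StrictMono φ ∧
            Tendsto (fun n => (⇑f)^[φ n] z) atTop (𝓝 w)} ∧
          Tendsto (fun n : ℕ => (((⇑F)^[n] wt).1 - wt.1) / (n:ℝ)) atTop (𝓝 r)})
        (sSup {r : ℝ | ∃ wt : 𝒜,
          cov wt ∈ {w : Ann | ∃ φ : ℕ → ℕ, StrictMono φ ∧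
            Tendsto (fun n => (⇑f)^[φ n] z) atTop (𝓝 w)} ∧
          Tendsto (fun n : ℕ => (((⇑F)^[n] wt).1 - wt.1) / (n:ℝ)) atTop (𝓝 r)}) := by
  intro zt hzt
  set ψ := annulusDisplacement F
  have hψ : Continuous ψ := continuous_annulusDisplacement F.continuous hFT
  obtain ⟨M, hM⟩ := hψ.exists_forall_abs_le
  obtain ⟨w₁, hw₁, r₁, hr₁, hle₁⟩ :=
    exists_mem_omegaLimit_tendsto_birkhoffAverage_ge_limsup f.continuous hψ z
  obtain ⟨w₂, hw₂, r₂, hr₂, hle₂⟩ :=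
    exists_mem_omegaLimit_tendsto_birkhoffAverage_le_liminf f.continuous hψ z
  have hz : (fun n : ℕ => (((⇑F)^[n] zt).1 - zt.1) / (n : ℝ)) = (birkhoffAverage ℝ f ψ · z) :=
    funext fun n => by rw [← hzt, birkhoffAverage_annulusDisplacement hlift hFT]
  rw [hz]
  exact Icc_subset_Icc
    (csInf_le_of_le
      ⟨-M, fun _ ⟨_, _, hr⟩ => (abs_le.1 (abs_le_of_tendsto_displacement_div hlift hFT hM hr)).1⟩
      (exists_lift_mem_of_mem_omegaLimit hlift hFT hw₂ hr₂) hle₂)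
    (le_csSup_of_le
      ⟨M, fun _ ⟨_, _, hr⟩ => (abs_le.1 (abs_le_of_tendsto_displacement_div hlift hFT hM hr)).2⟩
      (exists_lift_mem_of_mem_omegaLimit hlift hFT hw₁ hr₁) hle₁)

/-- The rotation interval of a point is contained in the rotation interval of its
ω-limit set: `ρ̄(F,z) ⊆ ρ̄(F, ω_f(z))`. -/
theorem stmt_6 (f : Ann ≃ₜ Ann) (F : 𝒜 ≃ₜ 𝒜)
    (hlift : ∀ z : 𝒜, cov (F z) = f (cov z)) (hFT : ∀ z, F (T z) = T (F z))
    (z : Ann) (hbdd : Bornology.IsBounded (Set.range fun n : ℕ => (⇑f)^[n] z)) :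
    ∀ zt : 𝒜, cov zt = z →
      Set.Icc (liminf (fun n : ℕ => (((⇑F)^[n] zt).1 - zt.1) / (n:ℝ)) atTop)
              (limsup (fun n : ℕ => (((⇑F)^[n] zt).1 - zt.1) / (n:ℝ)) atTop) ⊆
      Set.Icc
        (sInf {r : ℝ | ∃ wt : 𝒜,
          cov wt ∈ {w : Ann | ∃ φ : ℕ → ℕ, StrictMono φ ∧
            Tendsto (fun n => (⇑f)^[φ n] z) atTop (𝓝 w)} ∧
          Tendsto (fun n : ℕ => (((⇑F)^[n] wt).1 - wt.1) / (n:ℝ)) atTop (𝓝 r)})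
        (sSup {r : ℝ | ∃ wt : 𝒜,
          cov wt ∈ {w : Ann | ∃ φ : ℕ → ℕ, StrictMono φ ∧
            Tendsto (fun n => (⇑f)^[φ n] z) atTop (𝓝 w)} ∧
          Tendsto (fun n : ℕ => (((⇑F)^[n] wt).1 - wt.1) / (n:ℝ)) atTop (𝓝 r)}) :=
  stmt_6_general f F hlift hFT z
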